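/- In the mean-field rotator model, for h ≠ 0 the free-energy function F₀(m;β,h) = β|m|²/2 − log ∫_{S¹} e^{β σ·(m+h)} α(dσ) on the closed unit disk has every global minimizer m* lying on the line ℝh through the origin spanned by h (i.e. the minimizer points in the direction of h or its opposite); in particular, any global minimizer m* satisfies m* × h = 0. -/

import Mathlib

/-!
The partition function `∫ exp (β σ · (m + h)) α(dσ)` is invariant under rotations of `m + h`,
so it depends only on `|m + h|`. If `m` is off the line `ℝh`, then the point `m'` with
`m' + h = (|m + h| / |h|) h` has the same partition function, and by the strict Cauchy–Schwarz
inequality `|m'| = ||m + h| - |h|| < |m|`; hence `F₀ m' < F₀ m` for `β > 0`.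
-/

open Real intervalIntegral

theorem integral_comp_cos_mul_add_sin_mul {E : Type*} [NormedAddCommGroup E] [NormedSpace ℝ E]
    (g : ℝ → E) (a b : ℝ) :
    ∫ θ in (0 : ℝ)..2 * π, g (cos θ * a + sin θ * b) =
      ∫ θ in (0 : ℝ)..2 * π, g (√(a ^ 2 + b ^ 2) * cos θ) := by
  set z : ℂ := ⟨a, b⟩
  have hrot : ∀ θ, cos θ * a + sin θ * b = ‖z‖ * cos (θ - z.arg) := fun θ => by
    rw [cos_sub, mul_add, ← mul_assoc, ← mul_assoc, mul_comm ‖z‖, mul_comm ‖z‖, mul_assoc,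
      mul_assoc, Complex.norm_mul_cos_arg, Complex.norm_mul_sin_arg]
  have hper : Function.Periodic (fun θ => g (‖z‖ * cos θ)) (2 * π) := fun θ => by
    dsimp only
    rw [cos_add_two_pi]
  have hnorm : ‖z‖ = √(a ^ 2 + b ^ 2) := Complex.norm_eq_sqrt_sq_add_sq z
  simp_rw [hrot, ← hnorm]
  rw [integral_comp_sub_right (fun θ => g (‖z‖ * cos θ)), zero_sub, sub_eq_neg_add]
  simpa using hper.intervalIntegral_add_eq (-z.arg) 0

theorem integral_comp_cos_mul_add_sin_mul_congr {E : Type*} [NormedAddCommGroup E]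
    [NormedSpace ℝ E] (g : ℝ → E) {a b c d : ℝ} (h : a ^ 2 + b ^ 2 = c ^ 2 + d ^ 2) :
    ∫ θ in (0 : ℝ)..2 * π, g (cos θ * a + sin θ * b) =
      ∫ θ in (0 : ℝ)..2 * π, g (cos θ * c + sin θ * d) := by
  rw [integral_comp_cos_mul_add_sin_mul, integral_comp_cos_mul_add_sin_mul, h]

theorem mul_add_mul_lt_sqrt_mul_sqrt {a b c d : ℝ} (h : a * d - b * c ≠ 0) :
    a * c + b * d < √(a ^ 2 + b ^ 2) * √(c ^ 2 + d ^ 2) := by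
  have lagrange : (a * c + b * d) ^ 2 + (a * d - b * c) ^ 2 =
      (√(a ^ 2 + b ^ 2) * √(c ^ 2 + d ^ 2)) ^ 2 := by
    rw [mul_pow, sq_sqrt (by positivity), sq_sqrt (by positivity)]
    ring
  have hsq : (a * c + b * d) ^ 2 < (√(a ^ 2 + b ^ 2) * √(c ^ 2 + d ^ 2)) ^ 2 := by
    rw [← lagrange]
    exact lt_add_of_pos_right _ (sq_pos_of_ne_zero h)
  exact (le_abs_self _).trans_lt (abs_lt_of_sq_lt_sq hsq (by positivity))

theorem exists_sq_add_sq_lt_of_cross_ne_zero {m h : ℝ × ℝ} (hc : m.1 * h.2 - m.2 * h.1 ≠ 0) :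
    ∃ m' : ℝ × ℝ, (m'.1 + h.1) ^ 2 + (m'.2 + h.2) ^ 2 = (m.1 + h.1) ^ 2 + (m.2 + h.2) ^ 2 ∧
      m'.1 ^ 2 + m'.2 ^ 2 < m.1 ^ 2 + m.2 ^ 2 := by
  set r := √((m.1 + h.1) ^ 2 + (m.2 + h.2) ^ 2)
  set t := √(h.1 ^ 2 + h.2 ^ 2)
  have hr : r ^ 2 = (m.1 + h.1) ^ 2 + (m.2 + h.2) ^ 2 := sq_sqrt (by positivity)
  have ht : t ^ 2 = h.1 ^ 2 + h.2 ^ 2 := sq_sqrt (by positivity)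
  have hcs : (m.1 + h.1) * h.1 + (m.2 + h.2) * h.2 < r * t :=
    mul_add_mul_lt_sqrt_mul_sqrt (by convert hc using 1; ring)
  have ht0 : t ≠ 0 := by
    rintro ht0
    rw [ht0, zero_pow two_ne_zero] at ht
    have h1 : h.1 = 0 := by nlinarith
    have h2 : h.2 = 0 := by nlinarith
    simp [h1, h2] at hc
  refine ⟨((r / t - 1) * h.1, (r / t - 1) * h.2), ?_, ?_⟩
  · calc _ = (r / t) ^ 2 * t ^ 2 := by rw [ht]; ring
      _ = _ := by rw [div_pow, div_mul_cancel₀ _ (pow_ne_zero 2 ht0), hr]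
  · calc _ = (r / t - 1) ^ 2 * t ^ 2 := by rw [ht]; ring
      _ = r ^ 2 - 2 * (r * t) + t ^ 2 := by field_simp; ring
      _ < r ^ 2 - 2 * ((m.1 + h.1) * h.1 + (m.2 + h.2) * h.2) + t ^ 2 := by linarith
      _ = _ := by rw [hr, ht]; ring

theorem meanfield_rotator_minimizer_on_field_line_general
    (β : ℝ) (hβ : 0 < β) (h : ℝ × ℝ)
    (F₀ : ℝ × ℝ → ℝ)
    (hF : ∀ m : ℝ × ℝ, F₀ m =
      β * (m.1 ^ 2 + m.2 ^ 2) / 2 -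
        Real.log ((2 * Real.pi)⁻¹ * ∫ θ in (0 : ℝ)..(2 * Real.pi),
          Real.exp (β * (Real.cos θ * (m.1 + h.1) + Real.sin θ * (m.2 + h.2))))) :
    ∀ m : ℝ × ℝ, m.1 ^ 2 + m.2 ^ 2 ≤ 1 →
      (∀ m' : ℝ × ℝ, m'.1 ^ 2 + m'.2 ^ 2 ≤ 1 → F₀ m ≤ F₀ m') →
      m.1 * h.2 - m.2 * h.1 = 0 := by
  intro m hm hmin
  by_contra hc
  obtain ⟨m', hnorm, hlt⟩ := exists_sq_add_sq_lt_of_cross_ne_zero hc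
  have hZ := integral_comp_cos_mul_add_sin_mul_congr (fun x => exp (β * x)) hnorm
  have hF' : F₀ m' < F₀ m := by
    rw [hF m, hF m', hZ]
    have := mul_lt_mul_of_pos_left hlt hβ
    linarith
  exact (hmin m' (hlt.le.trans hm)).not_gt hF'

/-- for the mean-field rotator model with external field h ≠ 0, every global
minimizer m* of F₀(m;β,h) = β|m|²/2 − log ∫_{S¹} e^{βσ·(m+h)} α(dσ) on the closed unit
disk lies on the line ℝh: m* × h = 0. -/
theorem meanfield_rotator_minimizer_on_field_line
    (β : ℝ) (hβ : 0 < β) (h : ℝ × ℝ) (hh : h ≠ 0)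
    (F₀ : ℝ × ℝ → ℝ)
    (hF : ∀ m : ℝ × ℝ, F₀ m =
      β * (m.1 ^ 2 + m.2 ^ 2) / 2 -
        Real.log ((2 * Real.pi)⁻¹ * ∫ θ in (0 : ℝ)..(2 * Real.pi),
          Real.exp (β * (Real.cos θ * (m.1 + h.1) + Real.sin θ * (m.2 + h.2))))) :
    ∀ m : ℝ × ℝ, m.1 ^ 2 + m.2 ^ 2 ≤ 1 →
      (∀ m' : ℝ × ℝ, m'.1 ^ 2 + m'.2 ^ 2 ≤ 1 → F₀ m ≤ F₀ m') →
      m.1 * h.2 - m.2 * h.1 = 0 :=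
  meanfield_rotator_minimizer_on_field_line_general β hβ h F₀ hF
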